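/- arXiv:2306.11312 — 2 statements merged into one kernel-verified Lean document; each statement's English description precedes it below -/
import Mathlib

section
/- There exists a constant c > 0 such that for every sufficiently large n there exist probability distributions p, q on [n] with ||p - q||_1 = 1 with the following property: for every function s : ℕ → ℕ with s(n)/n → 0 as n → ∞, there exists n_0 such that for all n ≥ n_0, if p̂ is the empirical distribution obtained from s(n) i.i.d. samples from p, then the probability that ||p - p̂||_2 > ||q - p̂||_2 is at least c. -/
open MeasureTheory ProbabilityTheory Finset

/-- `p` is a probability distribution on `[n]` (nonnegative entries summing to `1`). -/
def IsDist {n : ℕ} (p : Fin n → ℝ) : Prop := (∀ i, 0 ≤ p i) ∧ ∑ i, p i = 1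

/-- The empirical distribution of the samples `X 0 ω, …, X (s-1) ω`: the fraction of the
`s` samples equal to `i`. -/
noncomputable def empirical {Ω : Type} {n s : ℕ} (X : Fin s → Ω → Fin n) (ω : Ω)
    (i : Fin n) : ℝ :=
  ((Finset.univ.filter fun j => X j ω = i).card : ℝ) / s

/-- `X` is a family of i.i.d. samples from the distribution `p` on `[n]`, defined on the
probability space `(Ω, μ)`. -/
def IIDSamples {Ω : Type} [MeasurableSpace Ω] {n s : ℕ} (μ : Measure Ω)
    (p : Fin n → ℝ) (X : Fin s → Ω → Fin n) : Prop :=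
  (∀ j, Measurable (X j)) ∧ iIndepFun X μ ∧
    ∀ j i, μ {ω | X j ω = i} = ENNReal.ofReal (p i)

/-!
Perturb two coordinates of weight `1/8` by `±a`, `a = 1/(8√n)`, and move the remaining mass
difference, of order `1/n` per coordinate, between two blocks of about `n/2` coordinates. Then
`‖p - p̂‖₂² - ‖q - p̂‖₂²` is `‖p‖₂² - ‖q‖₂² > 0` minus `2⟪p - q, p̂⟫`, and the inner product is
at most `O(1/n) - a (p̂₀ - p̂₁)`. The gap `s (p̂₀ - p̂₁)` is a sum of `s` independent centred
`{-1, 0, 1}`-valued variables, so by the Paley–Zygmund inequality (with the fourth moment)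
it exceeds a constant multiple of `√s` with probability at least `1/112`. Then
`a (p̂₀ - p̂₁) ≳ 1/√(n s)`, which beats the `O(1/n)` term when `s ≪ n`.
-/

theorem abs_sum_le_card {ι : Type*} {F : Finset ι} {x : ι → ℝ} (h : ∀ i ∈ F, |x i| ≤ 1) :
    |∑ i ∈ F, x i| ≤ F.card :=
  (abs_sum_le_sum_abs _ _).trans (by simpa using sum_le_card_nsmul F _ 1 h)

section Moments

variable {Ω : Type*} [MeasurableSpace Ω] {μ : Measure Ω}

theorem sq_integral_mul_le {f g : Ω → ℝ} (hf : MemLp f 2 μ) (hg : MemLp g 2 μ) :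
    (∫ ω, f ω * g ω ∂μ) ^ 2 ≤ (∫ ω, f ω ^ 2 ∂μ) * ∫ ω, g ω ^ 2 ∂μ := by
  have hf2 := hf.integrable_sq
  have hg2 := hg.integrable_sq
  have hfg : Integrable (fun ω => f ω * g ω) μ := hf.integrable_mul hg
  have hquad : ∀ t : ℝ, 0 ≤ (∫ ω, f ω ^ 2 ∂μ) * (t * t)
      + (-2 * ∫ ω, f ω * g ω ∂μ) * t + ∫ ω, g ω ^ 2 ∂μ := by
    intro t
    have hexp : ∫ ω, (t * f ω - g ω) ^ 2 ∂μ = (∫ ω, f ω ^ 2 ∂μ) * (t * t)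
        + (-2 * ∫ ω, f ω * g ω ∂μ) * t + ∫ ω, g ω ^ 2 ∂μ := by
      have hlin : Integrable (fun ω => t ^ 2 * f ω ^ 2 - 2 * t * (f ω * g ω)) μ :=
        (hf2.const_mul _).sub (hfg.const_mul _)
      simp_rw [fun ω => show (t * f ω - g ω) ^ 2
        = t ^ 2 * f ω ^ 2 - 2 * t * (f ω * g ω) + g ω ^ 2 by ring]
      rw [integral_add hlin hg2, integral_sub (hf2.const_mul _) (hfg.const_mul _),
        integral_const_mul, integral_const_mul]
      ring
    exact hexp ▸ integral_nonneg fun _ => sq_nonneg _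
  have := discrim_le_zero hquad
  rw [discrim] at this
  linarith

variable [IsProbabilityMeasure μ]

theorem paley_zygmund {X : Ω → ℝ} (hX : MemLp X 2 μ) (hX0 : ∀ ω, 0 ≤ X ω) {θ : ℝ}
    (hθ0 : 0 ≤ θ) (hθ1 : θ ≤ 1) :
    (1 - θ) ^ 2 * (∫ ω, X ω ∂μ) ^ 2 ≤ (∫ ω, X ω ^ 2 ∂μ) * μ.real {ω | θ * ∫ ω, X ω ∂μ < X ω} := by
  set A := {ω | θ * ∫ ω, X ω ∂μ < X ω}
  set χ := A.indicator fun _ => (1 : ℝ)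
  have hA : NullMeasurableSet A μ := nullMeasurableSet_lt aemeasurable_const hX.aemeasurable
  have hEX : 0 ≤ ∫ ω, X ω ∂μ := integral_nonneg hX0
  have h1A : MemLp χ 2 μ :=
    MemLp.of_bound (aestronglyMeasurable_const.indicator₀ hA) 1
      (.of_forall fun ω => by by_cases h : ω ∈ A <;> simp [χ, h])
  have hX1A : Integrable (fun ω => X ω * χ ω) μ := hX.integrable_mul h1A
  have hsplit : ∫ ω, X ω ∂μ ≤ θ * ∫ ω, X ω ∂μ + ∫ ω, X ω * χ ω ∂μ := by
    have hpt : ∀ ω, X ω ≤ θ * ∫ ω, X ω ∂μ + X ω * χ ω := fun ω => by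
      by_cases h : ω ∈ A
      · simp only [χ, Set.indicator_of_mem h, mul_one]; nlinarith
      · simp only [χ, Set.indicator_of_notMem h, mul_zero, add_zero]; exact not_lt.mp h
    calc ∫ ω, X ω ∂μ ≤ ∫ ω, (θ * ∫ ω, X ω ∂μ + X ω * χ ω) ∂μ :=
          integral_mono (hX.integrable one_le_two) ((integrable_const _).add hX1A) hpt
      _ = _ := by rw [integral_add (integrable_const _) hX1A, integral_const, probReal_univ, one_smul]
  have hind : ∫ ω, χ ω ^ 2 ∂μ = μ.real A := by
    have hsq : (fun ω => χ ω ^ 2) = χ := funext fun ω => by by_cases h : ω ∈ A <;> simp [χ, h]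
    rw [hsq, integral_indicator₀ hA, setIntegral_const, smul_eq_mul, mul_one]
  have hCS := sq_integral_mul_le hX h1A
  rw [hind] at hCS
  have h1θ : 0 ≤ (1 - θ) * ∫ ω, X ω ∂μ := mul_nonneg (by linarith) hEX
  calc (1 - θ) ^ 2 * (∫ ω, X ω ∂μ) ^ 2 = ((1 - θ) * ∫ ω, X ω ∂μ) ^ 2 := by ring
    _ ≤ (∫ ω, X ω * χ ω ∂μ) ^ 2 := pow_le_pow_left₀ h1θ (by linarith) 2
    _ ≤ _ := hCS

theorem integrable_abs_pow_of_memLp {T : Ω → ℝ} {p : ℕ} (hT : MemLp T p μ) {k : ℕ} (hk : k ≤ p) :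
    Integrable (fun ω => |T ω| ^ k) μ := by
  have : MemLp T k μ := hT.mono_exponent (by exact_mod_cast hk)
  simpa using this.integrable_norm_pow'

theorem integral_sq_pow_three_le {T : Ω → ℝ} (hT : MemLp T 4 μ) :
    (∫ ω, T ω ^ 2 ∂μ) ^ 3 ≤ (∫ ω, |T ω| ∂μ) ^ 2 * ∫ ω, T ω ^ 4 ∂μ := by
  have hT4 : MemLp T (4 : ℕ) μ := by exact_mod_cast hT
  have hm : AEStronglyMeasurable T μ := hT.aestronglyMeasurable
  have hsqrt : MemLp (fun ω => √|T ω|) 2 μ := by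
    rw [memLp_two_iff_integrable_sq (by fun_prop)]
    simpa [Real.sq_sqrt (abs_nonneg _)] using integrable_abs_pow_of_memLp hT4 (k := 1) (by norm_num)
  have hsqrt3 : MemLp (fun ω => √|T ω| * |T ω|) 2 μ := by
    rw [memLp_two_iff_integrable_sq (by fun_prop)]
    refine (integrable_abs_pow_of_memLp hT4 (k := 3) (by norm_num)).congr (.of_forall fun ω => ?_)
    simp only [mul_pow, Real.sq_sqrt (abs_nonneg _)]
    ring
  have habs : MemLp (fun ω => |T ω|) 2 μ := (hT.mono_exponent (by norm_num)).abs
  have hsq : MemLp (fun ω => T ω ^ 2) 2 μ := by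
    rw [memLp_two_iff_integrable_sq (by fun_prop)]
    simpa [← pow_mul, (by decide : Even 4).pow_abs] using integrable_abs_pow_of_memLp hT4 (k := 4) le_rfl
  have h1 : (∫ ω, T ω ^ 2 ∂μ) ^ 2 ≤ (∫ ω, |T ω| ∂μ) * ∫ ω, |T ω| ^ 3 ∂μ := by
    convert sq_integral_mul_le hsqrt hsqrt3 using 4 with ω ω ω
    · rw [← mul_assoc, Real.mul_self_sqrt (abs_nonneg _), abs_mul_abs_self, sq]
    · rw [Real.sq_sqrt (abs_nonneg _)]
    · rw [mul_pow, Real.sq_sqrt (abs_nonneg _)]; ring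
  have h2 : (∫ ω, |T ω| ^ 3 ∂μ) ^ 2 ≤ (∫ ω, T ω ^ 2 ∂μ) * ∫ ω, T ω ^ 4 ∂μ := by
    convert sq_integral_mul_le habs hsq using 4 with ω ω ω
    · rw [pow_succ', sq_abs]
    · rw [sq_abs]
    · ring
  have hV : 0 ≤ ∫ ω, T ω ^ 2 ∂μ := integral_nonneg fun _ => sq_nonneg _
  have hF : 0 ≤ ∫ ω, T ω ^ 4 ∂μ := integral_nonneg fun _ => by positivity
  rcases hV.eq_or_lt with hV0 | hVpos
  · rw [← hV0, zero_pow three_ne_zero]; positivity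
  · refine le_of_mul_le_mul_right ?_ hVpos
    calc (∫ ω, T ω ^ 2 ∂μ) ^ 3 * ∫ ω, T ω ^ 2 ∂μ = ((∫ ω, T ω ^ 2 ∂μ) ^ 2) ^ 2 := by ring
      _ ≤ ((∫ ω, |T ω| ∂μ) * ∫ ω, |T ω| ^ 3 ∂μ) ^ 2 := pow_le_pow_left₀ (by positivity) h1 2
      _ = (∫ ω, |T ω| ∂μ) ^ 2 * (∫ ω, |T ω| ^ 3 ∂μ) ^ 2 := by ring
      _ ≤ (∫ ω, |T ω| ∂μ) ^ 2 * ((∫ ω, T ω ^ 2 ∂μ) * ∫ ω, T ω ^ 4 ∂μ) := by gcongr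
      _ = _ := by ring

theorem ofReal_le_measure_le_of_integral_pow_four_le {T : Ω → ℝ} (hT : MemLp T 4 μ)
    (hmean : ∫ ω, T ω ∂μ = 0) (hvar : 0 < ∫ ω, T ω ^ 2 ∂μ) {κ : ℝ}
    (hκ : ∫ ω, T ω ^ 4 ∂μ ≤ κ * (∫ ω, T ω ^ 2 ∂μ) ^ 2) :
    ENNReal.ofReal (1 / (16 * κ)) ≤ μ {ω | √((∫ ω, T ω ^ 2 ∂μ) / κ) / 4 ≤ T ω} := by
  set V := ∫ ω, T ω ^ 2 ∂μ
  set E₁ := ∫ ω, |T ω| ∂μ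
  have hE₁ : V ≤ κ * E₁ ^ 2 := by
    refine le_of_mul_le_mul_right ?_ (pow_pos hvar 2)
    calc V * V ^ 2 = V ^ 3 := by ring
      _ ≤ E₁ ^ 2 * ∫ ω, T ω ^ 4 ∂μ := integral_sq_pow_three_le hT
      _ ≤ E₁ ^ 2 * (κ * V ^ 2) := by gcongr
      _ = κ * E₁ ^ 2 * V ^ 2 := by ring
  have hκpos : 0 < κ := by
    by_contra! h
    nlinarith [mul_nonneg_of_nonpos_of_nonpos h (neg_nonpos.mpr (sq_nonneg E₁))]
  set X := fun ω => max (T ω) 0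
  have hT2 : MemLp T 2 μ := hT.mono_exponent (by norm_num)
  have hX : MemLp X 2 μ := hT2.of_le (hT.aestronglyMeasurable.sup aestronglyMeasurable_const) (.of_forall fun ω => by
    simp only [X, Real.norm_eq_abs]; exact abs_max_le_max_abs_abs.trans (by simp))
  have hEX : ∫ ω, X ω ∂μ = E₁ / 2 := by
    have hpt : ∀ ω, X ω = (T ω + |T ω|) / 2 := fun ω => by
      rcases le_total 0 (T ω) with h | h
      · simp [X, h, abs_of_nonneg h]
      · simp [X, h, abs_of_nonpos h]
    simp_rw [hpt]
    rw [integral_div, integral_add (hT2.integrable one_le_two) (hT2.integrable one_le_two).abs,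
      hmean, zero_add]
  have hEX2 : ∫ ω, X ω ^ 2 ∂μ ≤ V :=
    integral_mono hX.integrable_sq hT2.integrable_sq fun ω => by
      rcases le_total 0 (T ω) with h | h
      · simp [X, h]
      · simp [X, h]; positivity
  have hPZ := paley_zygmund hX (fun ω => le_max_right _ _) (θ := 1 / 2) (by norm_num) (by norm_num)
  set A := {ω | 1 / 2 * ∫ ω, X ω ∂μ < X ω}
  have hA : 1 / (16 * κ) ≤ μ.real A := by
    rw [hEX] at hPZ
    have hPZ' : E₁ ^ 2 / 16 ≤ V * μ.real A := by
      nlinarith [mul_le_mul_of_nonneg_right hEX2 (measureReal_nonneg (μ := μ) (s := A))]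
    refine le_of_mul_le_mul_left ?_ hvar
    calc V * (1 / (16 * κ)) = V / κ / 16 := by field_simp
      _ ≤ E₁ ^ 2 / 16 := by gcongr; rwa [div_le_iff₀ hκpos, mul_comm]
      _ ≤ _ := hPZ'
  have hsub : A ⊆ {ω | √(V / κ) / 4 ≤ T ω} := by
    intro ω hω
    simp only [A, hEX, Set.mem_ofPred_eq] at hω ⊢
    have hE₁0 : 0 ≤ E₁ := integral_nonneg fun _ => abs_nonneg _
    have hsqrt : √(V / κ) ≤ E₁ := Real.sqrt_le_iff.mpr ⟨hE₁0, by rw [div_le_iff₀ hκpos]; linarith⟩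
    rcases lt_max_iff.mp hω with h | h <;> linarith
  calc ENNReal.ofReal (1 / (16 * κ)) ≤ ENNReal.ofReal (μ.real A) := ENNReal.ofReal_le_ofReal hA
    _ = μ A := ofReal_measureReal
    _ ≤ _ := measure_mono hsub

end Moments

section Independence

variable {Ω : Type*} [MeasurableSpace Ω] {μ : Measure Ω}

theorem ProbabilityTheory.IndepFun.integral_add_pow {T Z : Ω → ℝ} (h : IndepFun T Z μ)
    (hT : ∀ k, Integrable (fun ω => T ω ^ k) μ) (hZ : ∀ k, Integrable (fun ω => Z ω ^ k) μ)
    (m : ℕ) :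
    ∫ ω, (T ω + Z ω) ^ m ∂μ
      = ∑ k ∈ range (m + 1), (∫ ω, T ω ^ k ∂μ) * (∫ ω, Z ω ^ (m - k) ∂μ) * m.choose k := by
  have hmul : ∀ k l, IndepFun (fun ω => T ω ^ k) (fun ω => Z ω ^ l) μ := fun k l =>
    h.comp (measurable_id.pow_const k) (measurable_id.pow_const l)
  have hint : ∀ k ∈ range (m + 1),
      Integrable (fun ω => T ω ^ k * Z ω ^ (m - k) * (m.choose k : ℝ)) μ := fun k _ =>
    ((hmul k (m - k)).integrable_mul (hT k) (hZ (m - k))).mul_const _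
  simp_rw [add_pow]
  rw [integral_finsetSum _ hint]
  refine sum_congr rfl fun k _ => ?_
  rw [integral_mul_const]
  congr 1
  exact (hmul k (m - k)).integral_mul_eq_mul_integral (hT k).aestronglyMeasurable
    (hZ (m - k)).aestronglyMeasurable

variable [IsProbabilityMeasure μ]

theorem integrable_pow_of_abs_le {f : Ω → ℝ} (hf : Measurable f) {C : ℝ} (hC : ∀ ω, |f ω| ≤ C)
    (k : ℕ) : Integrable (fun ω => f ω ^ k) μ :=
  .of_bound (hf.pow_const k).aestronglyMeasurable (C ^ k) (.of_forall fun ω => by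
    rw [Real.norm_eq_abs, abs_pow]; exact pow_le_pow_left₀ (abs_nonneg _) (hC ω) k)

theorem integral_sum_sq_and_pow_four_le {ι : Type*} {Y : ι → Ω → ℝ} (hY : ∀ i, Measurable (Y i))
    (hY1 : ∀ i ω, |Y i ω| ≤ 1) (hind : iIndepFun Y μ) (hmean : ∀ i, ∫ ω, Y i ω ∂μ = 0)
    (F : Finset ι) :
    ∫ ω, (∑ i ∈ F, Y i ω) ^ 2 ∂μ = ∑ i ∈ F, ∫ ω, Y i ω ^ 2 ∂μ ∧
      ∫ ω, (∑ i ∈ F, Y i ω) ^ 4 ∂μ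
        ≤ ∑ i ∈ F, ∫ ω, Y i ω ^ 2 ∂μ + 3 * (∑ i ∈ F, ∫ ω, Y i ω ^ 2 ∂μ) ^ 2 := by
  classical
  induction F using Finset.induction_on with
  | empty => simp
  | @insert a F ha ih =>
    obtain ⟨ih2, ih4⟩ := ih
    set T := fun ω => ∑ i ∈ F, Y i ω
    have hTm : Measurable T := Finset.measurable_sum F fun i _ => hY i
    have hTb : ∀ ω, |T ω| ≤ F.card := fun ω => abs_sum_le_card fun i _ => hY1 i ω
    have hTmean : ∫ ω, T ω ∂μ = 0 := by
      rw [integral_finsetSum _ fun i _ => (integrable_pow_of_abs_le (hY i) (hY1 i) 1).congr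
        (.of_forall fun ω => pow_one _)]
      exact sum_eq_zero fun i _ => hmean i
    have hind' : IndepFun T (Y a) μ := by
      convert hind.indepFun_finsetSum_of_notMem hY ha using 1
      ext ω
      simp [T]
    have hexp := hind'.integral_add_pow (integrable_pow_of_abs_le hTm hTb)
      (integrable_pow_of_abs_le (hY a) (hY1 a))
    have hY4 : ∫ ω, Y a ω ^ 4 ∂μ ≤ ∫ ω, Y a ω ^ 2 ∂μ := by
      refine integral_mono (integrable_pow_of_abs_le (hY a) (hY1 a) 4)
        (integrable_pow_of_abs_le (hY a) (hY1 a) 2) fun ω => ?_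
      have h2 : Y a ω ^ 2 ≤ 1 := (sq_le_one_iff_abs_le_one _).mpr (hY1 a ω)
      nlinarith [sq_nonneg (Y a ω)]
    simp_rw [sum_insert ha, add_comm (Y a _)]
    rw [hexp 2, hexp 4]
    have ih2' : ∫ ω, T ω ^ 2 ∂μ = ∑ i ∈ F, ∫ ω, Y i ω ^ 2 ∂μ := ih2
    have ih4' : ∫ ω, T ω ^ 4 ∂μ ≤ _ := ih4
    simp only [sum_range_succ, range_one, sum_singleton, pow_zero, pow_one, integral_const,
      probReal_univ, smul_eq_mul, one_mul, mul_one, hTmean, hmean a, mul_zero, zero_mul, add_zero,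
      Nat.choose_zero_right, Nat.choose_self, Nat.cast_one, Nat.reduceAdd, Nat.reduceSub, tsub_zero,
      tsub_self, add_right_inj]
    refine ⟨ih2', ?_⟩
    rw [ih2', show Nat.choose 4 2 = 6 from rfl, Nat.cast_ofNat]
    nlinarith [sq_nonneg (∫ ω, Y a ω ^ 2 ∂μ)]

end Independence

section Empirical

variable {Ω : Type} {n s : ℕ} (X : Fin s → Ω → Fin n) (ω : Ω)

theorem empirical_nonneg (i : Fin n) : 0 ≤ empirical X ω i := by
  unfold empirical; positivity

theorem sum_ite_eq_mul_empirical (i : Fin n) :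
    ∑ j, (if X j ω = i then (1 : ℝ) else 0) = s * empirical X ω i := by
  rw [sum_boole, empirical]
  rcases eq_or_ne s 0 with rfl | hs
  · simp
  · field_simp

theorem sum_empirical (hs : s ≠ 0) : ∑ i, empirical X ω i = 1 := by
  have h : (s : ℝ) * ∑ i, empirical X ω i = s := by
    simp_rw [mul_sum, ← sum_ite_eq_mul_empirical]
    rw [sum_comm]
    simp
  exact (mul_eq_left₀ (by exact_mod_cast hs)).mp h

end Empirical

section Samples

variable {Ω : Type} [MeasurableSpace Ω] {μ : Measure Ω} [IsProbabilityMeasure μ] {n s : ℕ}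
  {p : Fin n → ℝ} {X : Fin s → Ω → Fin n}

theorem IIDSamples.integral_comp (hX : IIDSamples μ p X) (hp : ∀ i, 0 ≤ p i) (g : Fin n → ℝ)
    (j : Fin s) : ∫ ω, g (X j ω) ∂μ = ∑ i, g i * p i := by
  rw [← integral_map (hX.1 j).aemeasurable (Measurable.of_discrete.aestronglyMeasurable),
    integral_fintype (Integrable.of_finite)]
  refine sum_congr rfl fun i _ => ?_
  rw [map_measureReal_apply (hX.1 j) (measurableSet_singleton i), measureReal_def]
  change (μ {ω | X j ω = i}).toReal • g i = _
  rw [hX.2.2 j i, ENNReal.toReal_ofReal (hp i), smul_eq_mul, mul_comm]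


theorem ofReal_le_measure_empirical_gap (hX : IIDSamples μ p X) (hp : IsDist p) {i₀ i₁ : Fin n}
    (hne : i₀ ≠ i₁) (hp₀ : p i₀ = 1 / 8) (hp₁ : p i₁ = 1 / 8) :
    ENNReal.ofReal (1 / 112)
      ≤ μ {ω | √(s / 28) / 4 ≤ s * (empirical X ω i₀ - empirical X ω i₁)} := by
  rcases eq_or_ne s 0 with rfl | hs
  · simp
  set g : Fin n → ℝ := fun i => (if i = i₀ then 1 else 0) - if i = i₁ then 1 else 0
  set Y : Fin s → Ω → ℝ := fun j ω => g (X j ω)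
  have hgY : ∀ ω, ∑ j, Y j ω = s * (empirical X ω i₀ - empirical X ω i₁) := fun ω => by
    simp only [Y, g, sum_sub_distrib, sum_ite_eq_mul_empirical, mul_sub]
  have hY : ∀ j, Measurable (Y j) := fun j => (Measurable.of_discrete (f := g)).comp (hX.1 j)
  have hY1 : ∀ j ω, |Y j ω| ≤ 1 := fun j ω => by
    simp only [Y, g]; split_ifs <;> norm_num
  have hind : iIndepFun Y μ := hX.2.1.comp (fun _ => g) fun _ => Measurable.of_discrete
  have hmean : ∀ j, ∫ ω, Y j ω ∂μ = 0 := fun j => by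
    refine (hX.integral_comp hp.1 g j).trans ?_
    simp [g, sub_mul, sum_sub_distrib, hp₀, hp₁]
  have hsq : ∀ j, ∫ ω, Y j ω ^ 2 ∂μ = 1 / 4 := fun j => by
    refine (hX.integral_comp hp.1 (fun i => g i ^ 2) j).trans ?_
    have hg2 : ∀ i, g i ^ 2 = (if i = i₀ then 1 else 0) + if i = i₁ then 1 else 0 := fun i => by
      simp only [g]; split_ifs <;> simp_all
    norm_num [hg2, add_mul, sum_add_distrib, hp₀, hp₁]
  obtain ⟨h2, h4⟩ := integral_sum_sq_and_pow_four_le hY hY1 hind hmean univ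
  simp only [hsq, sum_const, card_univ, Fintype.card_fin, nsmul_eq_mul] at h2 h4
  have hs1 : (1 : ℝ) ≤ s := by exact_mod_cast Nat.one_le_iff_ne_zero.mpr hs
  have hT : MemLp (fun ω => ∑ j, Y j ω) 4 μ :=
    .of_bound (Finset.measurable_sum _ fun j _ => hY j).aestronglyMeasurable s
      (.of_forall fun ω => by simpa using abs_sum_le_card fun j (_ : j ∈ univ) => hY1 j ω)
  have hTmean : ∫ ω, ∑ j, Y j ω ∂μ = 0 := by
    rw [integral_finsetSum _ fun j _ => (integrable_pow_of_abs_le (hY j) (hY1 j) 1).congr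
      (.of_forall fun ω => pow_one _)]
    exact sum_eq_zero fun j _ => hmean j
  -- `V + 3 V² ≤ 7 V²` because `V = s / 4 ≥ 1 / 4`
  have key := ofReal_le_measure_le_of_integral_pow_four_le hT hTmean (by rw [h2]; positivity)
    (κ := 7) (by rw [h2]; nlinarith)
  rw [h2] at key
  convert key using 4 with ω
  · norm_num
  · rw [hgY, show (s : ℝ) * (1 / 4) / 7 = s / 28 by ring]

end Samples

def blockProfile (K : ℕ) (x₀ x₁ u v : ℝ) (i : ℕ) : ℝ :=
  if i = 0 then x₀ else if i = 1 then x₁ else if i < K + 2 then u else if i < 2 * K + 2 then v else 0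

theorem blockProfile_map₂ (φ : ℝ → ℝ → ℝ) (hφ : φ 0 0 = 0) (K : ℕ) (x₀ x₁ u v y₀ y₁ u' v' : ℝ)
    (i : ℕ) :
    φ (blockProfile K x₀ x₁ u v i) (blockProfile K y₀ y₁ u' v' i)
      = blockProfile K (φ x₀ y₀) (φ x₁ y₁) (φ u u') (φ v v') i := by
  unfold blockProfile; split_ifs <;> first | rfl | exact hφ

theorem blockProfile_map (φ : ℝ → ℝ) (hφ : φ 0 = 0) (K : ℕ) (x₀ x₁ u v : ℝ) (i : ℕ) :
    φ (blockProfile K x₀ x₁ u v i) = blockProfile K (φ x₀) (φ x₁) (φ u) (φ v) i := by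
  unfold blockProfile; split_ifs <;> first | rfl | exact hφ

theorem blockProfile_nonneg {K : ℕ} {x₀ x₁ u v : ℝ} (h₀ : 0 ≤ x₀) (h₁ : 0 ≤ x₁) (hu : 0 ≤ u)
    (hv : 0 ≤ v) (i : ℕ) : 0 ≤ blockProfile K x₀ x₁ u v i := by
  unfold blockProfile; split_ifs <;> first | assumption | exact le_rfl

theorem sum_blockProfile {n K : ℕ} (h : 2 * K + 2 ≤ n) (x₀ x₁ u v : ℝ) :
    ∑ i : Fin n, blockProfile K x₀ x₁ u v i = x₀ + x₁ + K * u + K * v := by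
  set f := blockProfile K x₀ x₁ u v
  have hblock : ∀ a b c, (∀ i, a ≤ i → i < b → f i = c) → ∑ i ∈ Ico a b, f i = (b - a : ℕ) * c :=
    fun a b c hc => by
      rw [sum_congr rfl fun i hi => hc i (mem_Ico.mp hi).1 (mem_Ico.mp hi).2, sum_const,
        Nat.card_Ico, nsmul_eq_mul]
  rw [Fin.sum_univ_eq_sum_range f, range_eq_Ico, ← sum_Ico_consecutive f (Nat.zero_le 2) (by omega),
    ← sum_Ico_consecutive f (by omega : 2 ≤ K + 2) (by omega),
    ← sum_Ico_consecutive f (by omega : K + 2 ≤ 2 * K + 2) h,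
    hblock 2 (K + 2) u fun i h₁ h₂ => by simp only [f, blockProfile]; split_ifs <;> first | rfl | omega,
    hblock (K + 2) (2 * K + 2) v fun i h₁ h₂ => by
      simp only [f, blockProfile]; split_ifs <;> first | rfl | omega,
    hblock (2 * K + 2) n 0 fun i h₁ h₂ => by
      simp only [f, blockProfile]; split_ifs <;> first | rfl | omega]
  rw [show K + 2 - 2 = K by omega, show 2 * K + 2 - (K + 2) = K by omega, Nat.Ico_zero_eq_range,
    sum_range_succ, sum_range_one]
  simp only [f, blockProfile]
  norm_num
  ring

theorem sum_mul_le_of_le_off_pair {ι : Type*} [Fintype ι] [DecidableEq ι] {w x : ι → ℝ}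
    {i₀ i₁ : ι} (hne : i₀ ≠ i₁) (hx : ∀ i, 0 ≤ x i) {c : ℝ} (hc : 0 ≤ c)
    (hw : ∀ i, i ≠ i₀ → i ≠ i₁ → w i ≤ c) :
    ∑ i, w i * x i ≤ w i₀ * x i₀ + w i₁ * x i₁ + c * ∑ i, x i := by
  have hi₁ : i₁ ∈ univ.erase i₀ := mem_erase.mpr ⟨hne.symm, mem_univ _⟩
  rw [← add_sum_erase _ _ (mem_univ i₀), ← add_sum_erase _ _ hi₁, ← add_assoc]
  gcongr
  calc ∑ i ∈ (univ.erase i₀).erase i₁, w i * x i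
      ≤ ∑ i ∈ (univ.erase i₀).erase i₁, c * x i := sum_le_sum fun i hi => by
        obtain ⟨h₁, h₀⟩ : i ≠ i₁ ∧ i ≠ i₀ := by simpa using hi
        exact mul_le_mul_of_nonneg_right (hw i h₀ h₁) (hx i)
    _ ≤ c * ∑ i, x i := by
      rw [← mul_sum]
      exact mul_le_mul_of_nonneg_left
        (sum_le_sum_of_subset_of_nonneg (subset_univ _) fun i _ _ => hx i) hc

def halfBlock (n : ℕ) : ℕ := (n - 2) / 2

noncomputable def pert (n : ℕ) : ℝ := √n / (8 * n)

noncomputable def distP (n : ℕ) (i : Fin n) : ℝ :=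
  blockProfile (halfBlock n) (1 / 8) (1 / 8) (3 / (4 * halfBlock n)) 0 i

noncomputable def distQ (n : ℕ) (i : Fin n) : ℝ :=
  blockProfile (halfBlock n) (1 / 8 + pert n) (1 / 8 - pert n) ((1 / 4 + pert n) / halfBlock n)
    ((1 - 2 * pert n) / (2 * halfBlock n)) i

section Construction

variable {n : ℕ}

theorem two_mul_halfBlock_add_two_le (hn : 2 ≤ n) : 2 * halfBlock n + 2 ≤ n := by
  unfold halfBlock; omega

theorem halfBlock_bounds (hn : 6 ≤ n) :
    (1 : ℝ) ≤ halfBlock n ∧ (n : ℝ) ≤ 4 * halfBlock n ∧ 4 * (halfBlock n : ℝ) ≤ 2 * n := by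
  unfold halfBlock
  refine ⟨?_, ?_, ?_⟩ <;> norm_cast <;> omega

theorem pert_pos (hn : 0 < n) : 0 < pert n := by
  unfold pert; positivity

theorem pert_sq (hn : 0 < n) : pert n ^ 2 = 1 / (64 * n) := by
  unfold pert
  rw [div_pow, Real.sq_sqrt (Nat.cast_nonneg n)]
  field_simp
  ring

theorem pert_le (hn : 100 ≤ n) : pert n ≤ 1 / 80 := by
  have h : pert n ^ 2 ≤ (1 / 80) ^ 2 := by
    rw [pert_sq (by omega), div_le_iff₀ (by positivity)]
    have : (100 : ℝ) ≤ n := by exact_mod_cast hn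
    nlinarith
  exact (pow_le_pow_iff_left₀ (pert_pos (by omega)).le (by norm_num) two_ne_zero).mp h

theorem isDist_distP (hn : 100 ≤ n) : IsDist (distP n) := by
  obtain ⟨hK, -, -⟩ := halfBlock_bounds (by omega : 6 ≤ n)
  refine ⟨fun i => blockProfile_nonneg (by norm_num) (by norm_num) (by positivity) le_rfl i, ?_⟩
  unfold distP
  rw [sum_blockProfile (two_mul_halfBlock_add_two_le (by omega))]
  field_simp
  norm_num

theorem isDist_distQ (hn : 100 ≤ n) : IsDist (distQ n) := by
  obtain ⟨hK, -, -⟩ := halfBlock_bounds (by omega : 6 ≤ n)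
  have ha := pert_pos (by omega : 0 < n)
  have ha' := pert_le hn
  refine ⟨fun i => blockProfile_nonneg (by positivity) (by linarith) (by positivity)
    (div_nonneg (by linarith) (by positivity)) i, ?_⟩
  unfold distQ
  rw [sum_blockProfile (two_mul_halfBlock_add_two_le (by omega))]
  field_simp
  ring

theorem distP_sub_distQ (hn : 6 ≤ n) (i : Fin n) :
    distP n i - distQ n i = blockProfile (halfBlock n) (-pert n) (pert n)
      ((1 - 2 * pert n) / (2 * halfBlock n)) (-((1 - 2 * pert n) / (2 * halfBlock n))) i := by
  obtain ⟨hK, -, -⟩ := halfBlock_bounds hn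
  rw [distP, distQ, blockProfile_map₂ (· - ·) (sub_zero 0)]
  congr 1 <;> field_simp <;> ring

theorem sum_abs_distP_sub_distQ (hn : 100 ≤ n) : ∑ i, |distP n i - distQ n i| = 1 := by
  obtain ⟨hK, -, -⟩ := halfBlock_bounds (by omega : 6 ≤ n)
  have ha := pert_pos (by omega : 0 < n)
  have ha' := pert_le hn
  simp_rw [distP_sub_distQ (by omega : 6 ≤ n), blockProfile_map (|·|) abs_zero]
  rw [sum_blockProfile (two_mul_halfBlock_add_two_le (by omega)), abs_neg, abs_neg, abs_of_pos ha,
    abs_of_nonneg (div_nonneg (by linarith) (by positivity))]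
  field_simp
  ring

theorem sum_sq_distQ_lt_sum_sq_distP (hn : 100 ≤ n) :
    ∑ i, distQ n i ^ 2 < ∑ i, distP n i ^ 2 := by
  obtain ⟨hK, -, hKn⟩ := halfBlock_bounds (by omega : 6 ≤ n)
  have ha := pert_pos (by omega : 0 < n)
  have ha' := pert_le hn
  rw [← sub_pos, ← sum_sub_distrib]
  simp only [distP, distQ, blockProfile_map₂ (fun x y => x ^ 2 - y ^ 2) (by simp)]
  rw [sum_blockProfile (two_mul_halfBlock_add_two_le (by omega))]
  have hsimp : (1 / 8) ^ 2 - (1 / 8 + pert n) ^ 2 + ((1 / 8) ^ 2 - (1 / 8 - pert n) ^ 2)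
      + halfBlock n * ((3 / (4 * (halfBlock n : ℝ))) ^ 2 - ((1 / 4 + pert n) / halfBlock n) ^ 2)
      + halfBlock n * (0 ^ 2 - ((1 - 2 * pert n) / (2 * halfBlock n)) ^ 2)
      = -2 * pert n ^ 2 + (1 / 4 + pert n / 2 - 2 * pert n ^ 2) / halfBlock n := by
    field_simp; ring
  have hmain : 1 / (2 * n) ≤ (1 / 4 + pert n / 2 - 2 * pert n ^ 2) / halfBlock n :=
    calc 1 / (2 * n) ≤ (1 / 4) / (halfBlock n : ℝ) := by
          rw [div_le_div_iff₀ (by positivity) (by positivity)]; linarith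
      _ ≤ _ := by gcongr; nlinarith
  have hsq : 2 * pert n ^ 2 = 1 / (2 * n) / 16 := by
    rw [pert_sq (by omega)]; field_simp; ring
  rw [hsimp]
  linarith [show 0 < 1 / (2 * (n : ℝ)) by positivity]

theorem sum_sq_distQ_sub_lt_sum_sq_distP_sub (hn : 100 ≤ n) {x : Fin n → ℝ} (hx : ∀ i, 0 ≤ x i)
    (hgap : 25 * ∑ i, x i ≤ √n * (x ⟨0, by omega⟩ - x ⟨1, by omega⟩)) :
    ∑ i, (distQ n i - x i) ^ 2 < ∑ i, (distP n i - x i) ^ 2 := by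
  obtain ⟨hK, hnK, -⟩ := halfBlock_bounds (by omega : 6 ≤ n)
  have ha := pert_pos (by omega : 0 < n)
  have ha' := pert_le hn
  have hn0 : (0 : ℝ) < n := by positivity
  set i₀ : Fin n := ⟨0, by omega⟩
  set i₁ : Fin n := ⟨1, by omega⟩
  set c := (1 - 2 * pert n) / (2 * halfBlock n)
  have hc : 0 ≤ c := div_nonneg (by linarith) (by positivity)
  have hc' : c ≤ 2 / n := by
    calc c ≤ 1 / (2 * halfBlock n) := div_le_div_of_nonneg_right (by linarith) (by positivity)
      _ ≤ 2 / n := by rw [div_le_div_iff₀ (by positivity) hn0]; linarith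
  have hw : ∀ i, i ≠ i₀ → i ≠ i₁ → distP n i - distQ n i ≤ c := fun i h₀ h₁ => by
    have h₀' : i.val ≠ 0 := fun h => h₀ (Fin.ext h)
    have h₁' : i.val ≠ 1 := fun h => h₁ (Fin.ext h)
    rw [distP_sub_distQ (by omega)]
    unfold blockProfile
    split_ifs <;> linarith
  have hinner := sum_mul_le_of_le_off_pair (by simp [i₀, i₁, Fin.ext_iff]) hx hc hw
  rw [distP_sub_distQ (by omega), distP_sub_distQ (by omega)] at hinner
  simp only [blockProfile, i₀, i₁, if_pos, one_ne_zero, if_false] at hinner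
  set S := ∑ i, x i
  have hS : 0 ≤ S := sum_nonneg fun i _ => hx i
  have hgap' : 25 / 8 * (S / n) ≤ pert n * (x i₀ - x i₁) :=
    calc 25 / 8 * (S / n) = 25 * S / (8 * n) := by ring
      _ ≤ √n * (x i₀ - x i₁) / (8 * n) := by gcongr
      _ = pert n * (x i₀ - x i₁) := by unfold pert; ring
  have hcS : c * S ≤ 2 * (S / n) :=
    calc c * S ≤ 2 / n * S := mul_le_mul_of_nonneg_right hc' hS
      _ = 2 * (S / n) := by ring
  have hexp : ∑ i, (distP n i - x i) ^ 2 - ∑ i, (distQ n i - x i) ^ 2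
      = (∑ i, distP n i ^ 2 - ∑ i, distQ n i ^ 2) - 2 * ∑ i, (distP n i - distQ n i) * x i := by
    simp only [← sum_sub_distrib, mul_sum]
    exact sum_congr rfl fun i _ => by ring
  have hΔ := sum_sq_distQ_lt_sum_sq_distP hn
  rw [← sub_pos, hexp]
  linarith [div_nonneg hS hn0.le]

end Construction

theorem mul_sum_empirical_le_of_gap {Ω : Type} {n s : ℕ} (X : Fin s → Ω → Fin n) (ω : Ω)
    (i₀ i₁ : Fin n) (hsn : 280000 * (s : ℝ) ≤ n)
    (hgap : √(s / 28) / 4 ≤ s * (empirical X ω i₀ - empirical X ω i₁)) :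
    25 * ∑ i, empirical X ω i ≤ √n * (empirical X ω i₀ - empirical X ω i₁) := by
  rcases eq_or_ne s 0 with rfl | hs
  · simp [empirical] -- with no samples, `empirical` is `0 / 0 = 0`
  rw [sum_empirical X ω hs, mul_one]
  set D := empirical X ω i₀ - empirical X ω i₁
  set r := √(s / 28)
  have hs0 : (0 : ℝ) < s := by positivity
  have hr : 0 ≤ r := Real.sqrt_nonneg _
  have hr2 : r ^ 2 = s / 28 := Real.sq_sqrt (by positivity)
  have hD : 0 ≤ D := le_of_mul_le_mul_left (by linarith : (s : ℝ) * 0 ≤ s * D) hs0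
  have hrD : 1 / 112 ≤ r * D := by
    refine le_of_mul_le_mul_left ?_ (by positivity : (0 : ℝ) < 4 * s)
    nlinarith
  have hn : 2800 * r ≤ √n := Real.le_sqrt_of_sq_le (by nlinarith)
  nlinarith

/-- There is a constant `c > 0` such that for all sufficiently large `n` there are
distributions `p n, q n` on `[n]` with `‖p n - q n‖₁ = 1` such that for every sample-size
function `s` with `s n / n → 0`, for all sufficiently large `n`: if `p̂` is the empirical
distribution of `s n` i.i.d. samples from `p n`, then `P(‖p n - p̂‖₂ > ‖q n - p̂‖₂) ≥ c`. -/
theorem l2_nns_on_empirical_fails :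
    ∃ c : ℝ, 0 < c ∧
      ∃ (N : ℕ) (p q : (n : ℕ) → Fin n → ℝ),
        (∀ n, N ≤ n → IsDist (p n) ∧ IsDist (q n) ∧ (∑ j, |p n j - q n j| = 1)) ∧
        ∀ s : ℕ → ℕ, Filter.Tendsto (fun n => (s n : ℝ) / n) Filter.atTop (nhds 0) →
          ∃ n₀ : ℕ, ∀ n, n₀ ≤ n →
            ∀ (Ω : Type) (_ : MeasurableSpace Ω) (μ : Measure Ω), IsProbabilityMeasure μ →
              ∀ X : Fin (s n) → Ω → Fin n, IIDSamples μ (p n) X →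
                ENNReal.ofReal c ≤
                  μ {ω | Real.sqrt (∑ j, (q n j - empirical X ω j) ^ 2) <
                          Real.sqrt (∑ j, (p n j - empirical X ω j) ^ 2)} := by
  refine ⟨1 / 112, by norm_num, 100, distP, distQ,
    fun n hn => ⟨isDist_distP hn, isDist_distQ hn, sum_abs_distP_sub_distQ hn⟩, fun s hs => ?_⟩
  obtain ⟨n₀, hn₀⟩ := Filter.eventually_atTop.mp
    (hs.eventually_le_const (by norm_num : (0 : ℝ) < 1 / 280000))
  refine ⟨max n₀ 100, fun n hn Ω _ μ _ X hX => ?_⟩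
  have hn100 : 100 ≤ n := le_of_max_le_right hn
  have hsn : 280000 * (s n : ℝ) ≤ n := by
    have h := hn₀ n (le_of_max_le_left hn)
    rw [div_le_iff₀ (by positivity)] at h
    linarith
  have hp₀ : distP n ⟨0, by omega⟩ = 1 / 8 := by simp [distP, blockProfile]
  have hp₁ : distP n ⟨1, by omega⟩ = 1 / 8 := by simp [distP, blockProfile]
  refine (ofReal_le_measure_empirical_gap hX (isDist_distP hn100) (by simp [Fin.ext_iff]) hp₀ hp₁).trans
    (measure_mono fun ω hω => Real.sqrt_lt_sqrt (by positivity) ?_)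
  exact sum_sq_distQ_sub_lt_sum_sq_distP_sub hn100 (empirical_nonneg X ω)
    (mul_sum_empirical_le_of_gap X ω _ _ hsn hω)
end

section
/- Let p and v be probability distributions on [n], let L ⊆ [n], let T = Σ_{i∈L} p(i), let s > 0, and let X(1), ..., X(n) be independent random variables with X(i) ~ Poisson(s·p(i)). Then Var[ Σ_{i∈L} (X(i) - s·v(i))² ] ≤ 4s³·||p_L||_2·||p_L - v_L||_2² + 6s²·||p_L||_2² + s·T. -/
open MeasureTheory ProbabilityTheory Finset

open scoped NNReal

lemma Nat.cast_descFactorial_succ {R : Type*} [CommRing R] (n k : ℕ) :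
    (n.descFactorial (k + 1) : R) = n.descFactorial k * (n - k) := by
  simp only [← descPochhammer_eval_eq_descFactorial R, descPochhammer_succ_eval]

namespace ProbabilityTheory

variable (r : ℝ≥0)

lemma hasSum_poissonMeasure_real_mul_descFactorial (k : ℕ) :
    HasSum (fun n => Po(r).real {n} * n.descFactorial k) ((r : ℝ) ^ k) := by
  refine (hasSum_nat_add_iff' k).mp ?_
  have hlow : ∑ n ∈ range k, Po(r).real {n} * n.descFactorial k = 0 :=
    sum_eq_zero fun n hn => by simp [Nat.descFactorial_eq_zero_iff_lt.mpr (mem_range.mp hn)]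
  have hshift (m : ℕ) :
      Po(r).real {m + k} * (m + k).descFactorial k = r ^ k * Po(r).real {m} := by
    have hfac : (m + k).factorial = m.factorial * (m + k).descFactorial k := by
      simpa using (Nat.factorial_mul_descFactorial (Nat.le_add_left k m)).symm
    simp only [poissonMeasure_real_singleton, hfac, pow_add]
    push_cast
    field_simp
  rw [hlow, sub_zero]
  simp_rw [hshift, poissonMeasure_real_singleton]
  simpa using (hasSum_one_poissonMeasure r).mul_left ((r : ℝ) ^ k)

variable {r} {f : ℕ → ℝ} {S : ℝ}

lemma integrable_poissonMeasure_of_hasSum (hf : 0 ≤ f)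
    (h : HasSum (fun n => Po(r).real {n} * f n) S) : Integrable f Po(r) := by
  refine integrable_poissonMeasure_iff.mpr ?_
  simpa [← poissonMeasure_real_singleton, Real.norm_eq_abs, abs_of_nonneg (hf _)] using h.summable

lemma integral_poissonMeasure_of_hasSum (hf : 0 ≤ f)
    (h : HasSum (fun n => Po(r).real {n} * f n) S) : ∫ n, f n ∂Po(r) = S := by
  refine (hasSum_integral_poissonMeasure (integrable_poissonMeasure_of_hasSum hf h)).unique ?_
  simpa [← poissonMeasure_real_singleton] using h

variable (r) (c : ℝ)

lemma hasSum_poissonMeasure_real_mul_sub_sq :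
    HasSum (fun n : ℕ => Po(r).real {n} * ((n : ℝ) - c) ^ 2) ((r - c) ^ 2 + r) := by
  have d k := hasSum_poissonMeasure_real_mul_descFactorial r k
  convert (d 2).add (((d 1).mul_left (1 - 2 * c)).add ((d 0).mul_left (c ^ 2))) using 1
  · ext n
    simp only [Nat.cast_descFactorial_succ, Nat.descFactorial_zero]
    push_cast
    ring
  · ring

lemma hasSum_poissonMeasure_real_mul_sub_pow_four :
    HasSum (fun n : ℕ => Po(r).real {n} * ((n : ℝ) - c) ^ 4)
      ((r - c) ^ 4 + 6 * (r - c) ^ 2 * r + 4 * (r - c) * r + 3 * r ^ 2 + r) := by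
  have d k := hasSum_poissonMeasure_real_mul_descFactorial r k
  -- falling factorials `x⁽ᵏ⁾`: `x⁴ = x⁽⁴⁾ + 6 x⁽³⁾ + 7 x⁽²⁾ + x`, `x³ = x⁽³⁾ + 3 x⁽²⁾ + x`, `x² = x⁽²⁾ + x`
  convert (d 4).add (((d 3).mul_left (6 - 4 * c)).add
    (((d 2).mul_left (7 - 12 * c + 6 * c ^ 2)).add
    (((d 1).mul_left (1 - 4 * c + 6 * c ^ 2 - 4 * c ^ 3)).add ((d 0).mul_left (c ^ 4))))) using 1
  · ext n
    simp only [Nat.cast_descFactorial_succ, Nat.descFactorial_zero]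
    push_cast
    ring
  · ring

lemma memLp_sub_sq_poissonMeasure :
    MemLp (fun n : ℕ => ((n : ℝ) - c) ^ 2) 2 Po(r) := by
  refine (memLp_two_iff_integrable_sq .of_discrete).mpr ?_
  simpa [← pow_mul] using integrable_poissonMeasure_of_hasSum (fun n => by positivity)
    (hasSum_poissonMeasure_real_mul_sub_pow_four r c)

lemma variance_sub_sq_poissonMeasure :
    Var[fun n : ℕ => ((n : ℝ) - c) ^ 2; Po(r)] =
      r + 2 * r ^ 2 + 4 * (r - c) * r + 4 * (r - c) ^ 2 * r := by
  rw [variance_eq_sub (memLp_sub_sq_poissonMeasure r c)]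
  have h2 := integral_poissonMeasure_of_hasSum (fun n => by positivity)
    (hasSum_poissonMeasure_real_mul_sub_sq r c)
  have h4 := integral_poissonMeasure_of_hasSum (fun n => by positivity)
    (hasSum_poissonMeasure_real_mul_sub_pow_four r c)
  simp only [Pi.pow_apply, ← pow_mul, h2]
  rw [h4]
  ring

lemma variance_sub_sq_poissonMeasure_le {s p v q : ℝ} (hs : 0 ≤ s) (hp : 0 ≤ p) (hv : 0 ≤ v)
    (hpq : p ≤ q) :
    Var[fun n : ℕ => ((n : ℝ) - s * v) ^ 2; Po((s * p).toNNReal)] ≤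
      4 * s ^ 3 * q * (p - v) ^ 2 + 6 * s ^ 2 * p ^ 2 + s * p := by
  rw [variance_sub_sq_poissonMeasure, Real.coe_toNNReal _ (mul_nonneg hs hp)]
  have hcubic : s ^ 3 * p * (p - v) ^ 2 ≤ s ^ 3 * q * (p - v) ^ 2 := by gcongr
  have hcross : 0 ≤ s ^ 2 * p * v := by positivity
  nlinarith

end ProbabilityTheory

lemma le_sqrt_sum_sq {ι : Type*} {s : Finset ι} (f : ι → ℝ) {i : ι} (hi : i ∈ s) :
    f i ≤ √(∑ j ∈ s, f j ^ 2) :=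
  (le_abs_self _).trans (Real.abs_le_sqrt (single_le_sum (fun j _ => sq_nonneg (f j)) hi))

theorem light_estimator_variance_general {n : ℕ} (p v : Fin n → ℝ)
    (hp : IsDist p) (hv : IsDist v) (L : Finset (Fin n)) (s : ℝ) (hs : 0 < s)
    (Ω : Type) [MeasurableSpace Ω] (μ : Measure Ω)
    (X : Fin n → Ω → ℕ) (hmeas : ∀ i, Measurable (X i))
    (hindep : iIndepFun X μ)
    (hlaw : ∀ i, Measure.map (X i) μ = poissonMeasure (Real.toNNReal (s * p i))) :
    variance (fun ω => ∑ i ∈ L, ((X i ω : ℝ) - s * v i) ^ 2) μ ≤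
      4 * s ^ 3 * Real.sqrt (∑ i ∈ L, (p i) ^ 2) * (∑ i ∈ L, (p i - v i) ^ 2)
        + 6 * s ^ 2 * (∑ i ∈ L, (p i) ^ 2) + s * ∑ i ∈ L, p i := by
  set g : Fin n → ℕ → ℝ := fun i m => ((m : ℝ) - s * v i) ^ 2
  have hX i : MeasurePreserving (X i) μ Po((s * p i).toNNReal) := ⟨hmeas i, hlaw i⟩
  have hpairwise : Set.Pairwise L fun i j => IndepFun (g i ∘ X i) (g j ∘ X j) μ :=
    fun i _ j _ hij => (hindep.indepFun hij).comp .of_discrete .of_discrete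
  calc Var[fun ω => ∑ i ∈ L, g i (X i ω); μ]
      = ∑ i ∈ L, Var[g i ∘ X i; μ] := by
        rw [← Finset.sum_fn]
        exact IndepFun.variance_sum
          (fun i _ => (memLp_sub_sq_poissonMeasure _ _).comp_measurePreserving (hX i)) hpairwise
    _ = ∑ i ∈ L, Var[g i; Po((s * p i).toNNReal)] :=
        sum_congr rfl fun i _ => (hX i).variance_fun_comp .of_discrete
    _ ≤ ∑ i ∈ L, (4 * s ^ 3 * √(∑ j ∈ L, p j ^ 2) * (p i - v i) ^ 2 + 6 * s ^ 2 * p i ^ 2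
          + s * p i) :=
        sum_le_sum fun i hi =>
          variance_sub_sq_poissonMeasure_le hs.le (hp.1 i) (hv.1 i) (le_sqrt_sum_sq p hi)
    _ = _ := by simp only [sum_add_distrib, mul_sum]

/-- If `X i ~ Poisson(s p i)` are independent and `T = ∑_{i ∈ L} p i`, then
`Var[∑_{i ∈ L} (X i - s v i)²] ≤ 4 s³ ‖p_L‖₂ ‖p_L - v_L‖₂² + 6 s² ‖p_L‖₂² + s T`. -/
theorem light_estimator_variance {n : ℕ} (p v : Fin n → ℝ)
    (hp : IsDist p) (hv : IsDist v) (L : Finset (Fin n)) (s : ℝ) (hs : 0 < s)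
    (Ω : Type) [MeasurableSpace Ω] (μ : Measure Ω) [IsProbabilityMeasure μ]
    (X : Fin n → Ω → ℕ) (hmeas : ∀ i, Measurable (X i))
    (hindep : iIndepFun X μ)
    (hlaw : ∀ i, Measure.map (X i) μ = poissonMeasure (Real.toNNReal (s * p i))) :
    variance (fun ω => ∑ i ∈ L, ((X i ω : ℝ) - s * v i) ^ 2) μ ≤
      4 * s ^ 3 * Real.sqrt (∑ i ∈ L, (p i) ^ 2) * (∑ i ∈ L, (p i - v i) ^ 2)
        + 6 * s ^ 2 * (∑ i ∈ L, (p i) ^ 2) + s * ∑ i ∈ L, p i :=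
  light_estimator_variance_general p v hp hv L s hs Ω μ X hmeas hindep hlaw
end
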